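/- Fix an integer p ≥ 1 and for n, i ∈ ℕ let A_{n,i} := Σ_{j=0}^{n} (−1)^{n−j} t^{p(n−j)(n−j−1)/2} (n choose j)_{t^p} (pj choose i)_t ∈ ℤ[t] be the p-Frobenius coefficients. Then A_{n,i} = 0 unless n ≤ i ≤ pn, and when n ≤ i ≤ pn one has in ℤ[t]: t^{i(i−1)/2} (1−t)^{i−n} (i)_t! · A_{n,i} = (p)_t^n (n)_{t^p}! t^{p n(n−1)/2} Σ_{l=0}^{i−n} (−1)^{i−n+l} t^{l(l−1)/2} (i choose l)_t (i−l choose n)_{t^p}. -/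
import Mathlib


def qInt {R : Type*} [CommRing R] (q : R) (m : ℕ) : R := ∑ i ∈ Finset.range m, q ^ i

def qFact {R : Type*} [CommRing R] (q : R) : ℕ → R
  | 0 => 1
  | n + 1 => qFact q n * qInt q (n + 1)

def qChoose {R : Type*} [CommRing R] (q : R) : ℕ → ℕ → R
  | _, 0 => 1
  | 0, _ + 1 => 0
  | n + 1, k + 1 => qChoose q n k + q ^ (k + 1) * qChoose q n (k + 1)

variable {R : Type*} [CommRing R] (q : R)

@[simp] lemma qChoose_zero_right (n : ℕ) : qChoose q n 0 = 1 := by cases n <;> rfl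
lemma qChoose_succ_succ (n k : ℕ) :
    qChoose q (n+1) (k+1) = qChoose q n k + q ^ (k + 1) * qChoose q n (k + 1) := rfl
lemma qChoose_eq_zero : ∀ {n k : ℕ}, n < k → qChoose q n k = 0 := by
  intro n
  induction n with
  | zero => intro k hk; cases k with | zero => omega | succ k => rfl
  | succ n ih =>
    intro k hk
    cases k with
    | zero => omega
    | succ k => rw [qChoose_succ_succ, ih (by omega), ih (by omega)]; ring
@[simp] lemma qChoose_self : ∀ n : ℕ, qChoose q n n = 1 := by
  intro n
  induction n with
  | zero => rfl
  | succ n ih => rw [qChoose_succ_succ, ih, qChoose_eq_zero q (by omega)]; ring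
lemma qInt_add (a b : ℕ) : qInt q (a + b) = qInt q a + q ^ a * qInt q b := by
  simp [qInt, Finset.sum_range_add, Finset.mul_sum, pow_add]
@[simp] lemma qInt_zero : qInt q 0 = 0 := by simp [qInt]

lemma absorb_aux : ∀ m : ℕ,
    (∀ i, qInt q (i+1) * qChoose q m (i+1) = qInt q (m-i) * qChoose q m i) ∧
    (∀ i, qInt q (m+1-i) * qChoose q (m+1) i = qInt q (m+1) * qChoose q m i) := by
  intro m
  induction m with
  | zero =>
    constructor
    · intro i; cases i <;> simp [qChoose_eq_zero]
    · intro i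
      match i with
      | 0 => simp
      | 1 => simp [qChoose_eq_zero]
      | (k+2) => simp [qChoose_eq_zero q (show (1:ℕ) < k+2 by omega),
            qChoose_eq_zero q (show (0:ℕ) < k+2 by omega)]
  | succ m ih =>
    obtain ⟨a1, H⟩ := ih
    have a1' : ∀ i, qInt q (i+1) * qChoose q (m+1) (i+1) = qInt q (m+1-i) * qChoose q (m+1) i := by
      intro i
      by_cases him : i ≤ m
      · rw [qChoose_succ_succ, mul_add, H i, mul_left_comm, a1 i]
        have : qInt q (i+1) + q^(i+1) * qInt q (m-i) = qInt q (m+1) := by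
          rw [← qInt_add]; congr 1; omega
        rw [show qInt q (i+1) * qChoose q m i + q ^ (i + 1) * (qInt q (m - i) * qChoose q m i)
              = (qInt q (i+1) + q^(i+1) * qInt q (m-i)) * qChoose q m i by ring, this]
      · have h1 : qChoose q (m+1) (i+1) = 0 := qChoose_eq_zero q (by omega)
        have h2 : m+1-i = 0 := by omega
        rw [h1, h2, qInt_zero, mul_zero, zero_mul]
    refine ⟨a1', ?_⟩
    intro i
    cases i with
    | zero => simp
    | succ i =>
      by_cases him : i ≤ m+1
      · rw [qChoose_succ_succ, mul_add]
        have e1 : qInt q (m+1+1-(i+1)) = qInt q (m+1-i) := by congr 1; omega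
        rw [e1, ← a1' i]
        have e2 : qInt q (i+1) + q^(i+1) * qInt q (m+1-i) = qInt q (m+1+1) := by
          rw [← qInt_add]; congr 1; omega
        linear_combination qChoose q (m+1) (i+1) * e2
      · have h1 : qChoose q (m+2) (i+1) = 0 := qChoose_eq_zero q (by omega)
        have h2 : qChoose q (m+1) (i+1) = 0 := qChoose_eq_zero q (by omega)
        rw [h1, h2, mul_zero, mul_zero]
lemma one_sub_mul_qInt (k : ℕ) : (1 - q) * qInt q k = 1 - q ^ k := by
  induction k with
  | zero => simp [qInt]
  | succ k ih => rw [qInt, Finset.sum_range_succ, ← qInt, mul_add, ih]; ring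

lemma absorb1 (m i : ℕ) :
    qInt q (i+1) * qChoose q m (i+1) = qInt q (m-i) * qChoose q m i :=
  (absorb_aux q m).1 i

def tri (k : ℕ) : ℕ := k * (k - 1) / 2
lemma tri_succ (k : ℕ) : tri (k+1) = tri k + k := by
  unfold tri
  rw [← Finset.sum_range_id, ← Finset.sum_range_id, Finset.sum_range_succ]

lemma qFact_succ (i : ℕ) : qFact q (i+1) = qFact q i * qInt q (i+1) := rfl

lemma V_succ (m i : ℕ) :
    q^i * ((1-q)^(i+1) * qFact q (i+1) * qChoose q m (i+1)) =
    (q^i - q^m) * ((1-q)^i * qFact q i * qChoose q m i) := by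
  by_cases him : i ≤ m
  · have key : q^i * ((1-q) * qInt q (m-i)) = q^i - q^m := by
      rw [one_sub_mul_qInt, mul_sub, mul_one, ← pow_add]
      congr 2
      omega
    rw [qFact_succ]
    linear_combination (q^i * (1-q)^(i+1) * qFact q i) * absorb1 q m i
      + ((1-q)^i * qFact q i * qChoose q m i) * key
  · rw [qChoose_eq_zero q (show m < i by omega), qChoose_eq_zero q (show m < i+1 by omega)]
    ring

lemma lemU (m : ℕ) : ∀ N : ℕ,
    ∑ i ∈ Finset.range (m+1),
      ((-1:R)^i * q^(tri i) * ((1-q)^i * qFact q i * qChoose q m i)) * qChoose q N i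
    = q^(m*N) := by
  set g : ℕ → R := fun i => (-1:R)^i * q^(tri i) * ((1-q)^i * qFact q i * qChoose q m i)
    with hgdef
  have hg : ∀ i, g (i+1) = (q^m - q^i) * g i := by
    intro i
    show (-1:R)^(i+1) * q^(tri (i+1)) * ((1-q)^(i+1) * qFact q (i+1) * qChoose q m (i+1))
      = (q^m - q^i) * ((-1:R)^i * q^(tri i) * ((1-q)^i * qFact q i * qChoose q m i))
    rw [tri_succ, pow_add]
    linear_combination ((-1:R)^(i+1) * q^(tri i)) * V_succ q m i
  have hg0 : g 0 = 1 := by simp [hgdef, tri, qFact]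
  intro N
  induction N with
  | zero =>
    rw [Nat.mul_zero, pow_zero]
    rw [Finset.sum_eq_single_of_mem 0 (Finset.mem_range.mpr (by omega))]
    · simp [hg0, tri, qFact]
    · intro b _ hb
      rw [qChoose_eq_zero q (show 0 < b by omega)]
      ring
  | succ N ih =>
    have e1 : ∀ i, g (i+1) * qChoose q (N+1) (i+1)
        = (q^m - q^i) * (g i * qChoose q N i) + g (i+1) * (q^(i+1) * qChoose q N (i+1)) := by
      intro i
      rw [qChoose_succ_succ]
      linear_combination (qChoose q N i) * hg i
    rw [Finset.sum_range_succ' (fun i => g i * qChoose q (N+1) i) m]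
    rw [Finset.sum_congr rfl (fun i _ => e1 i), Finset.sum_add_distrib]
    have hb : ∑ i ∈ Finset.range m, g (i+1) * (q^(i+1) * qChoose q N (i+1))
        = (∑ j ∈ Finset.range (m+1), g j * (q^j * qChoose q N j)) - g 0 * (q^0 * qChoose q N 0) := by
      rw [Finset.sum_range_succ' (fun j => g j * (q^j * qChoose q N j)) m]
      ring
    have ha : ∑ i ∈ Finset.range m, (q^m - q^i) * (g i * qChoose q N i)
        = q^m * (∑ i ∈ Finset.range m, g i * qChoose q N i)
          - ∑ i ∈ Finset.range m, g i * (q^i * qChoose q N i) := by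
      rw [Finset.mul_sum, ← Finset.sum_sub_distrib]
      apply Finset.sum_congr rfl
      intros
      ring
    have hc : ∑ j ∈ Finset.range (m+1), g j * (q^j * qChoose q N j)
        = (∑ j ∈ Finset.range m, g j * (q^j * qChoose q N j)) + g m * (q^m * qChoose q N m) :=
      Finset.sum_range_succ _ m
    have hd : (∑ i ∈ Finset.range m, g i * qChoose q N i)
        = (∑ i ∈ Finset.range (m+1), g i * qChoose q N i) - g m * qChoose q N m := by
      rw [Finset.sum_range_succ]
      ring
    rw [hb, ha, hc, hd, ih, hg0]
    rw [show m * (N+1) = m + m*N by ring, pow_add]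
    simp
    ring

lemma lemC : ∀ (n : ℕ) (y : R),
    ∑ j ∈ Finset.range (n+1), ((-1:R)^j * q^(tri (n-j)) * qChoose q n j) * y^j
    = ∏ k ∈ Finset.range n, (q^k - y) := by
  intro n
  induction n with
  | zero => intro y; simp [tri]
  | succ n ih =>
    intro y
    set e : ℕ → R := fun j => ((-1:R)^j * q^(tri (n-j)) * qChoose q n j) * y^j with hedef
    have hstep : ∀ j, j < n+1 →
        ((-1:R)^(j+1) * q^(tri (n+1-(j+1))) * qChoose q (n+1) (j+1)) * y^(j+1)
        = -(y * e j) + q^n * e (j+1) := by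
      intro j hj
      have hnj : n+1-(j+1) = n-j := by omega
      rw [hnj, qChoose_succ_succ]
      by_cases hjn : j < n
      · have h2 : tri (n-j) = tri (n-(j+1)) + (n-(j+1)) := by
          rw [← tri_succ]
          congr 1
          omega
        show ((-1:R)^(j+1) * q^(tri (n-j)) * (qChoose q n j + q^(j+1) * qChoose q n (j+1))) * y^(j+1)
          = -(y * (((-1:R)^j * q^(tri (n-j)) * qChoose q n j) * y^j))
            + q^n * (((-1:R)^(j+1) * q^(tri (n-(j+1))) * qChoose q n (j+1)) * y^(j+1))
        rw [h2, pow_add]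
        have h3 : q^(n-(j+1)) * q^(j+1) = q^n := by rw [← pow_add]; congr 1; omega
        linear_combination ((-1:R)^(j+1) * q^(tri (n-(j+1))) * qChoose q n (j+1) * y^(j+1)) * h3
      · have hjn' : j = n := by omega
        subst hjn'
        simp only [hedef]
        rw [qChoose_eq_zero q (show j < j+1 by omega)]
        ring
    rw [Finset.sum_range_succ' (fun j => ((-1:R)^j * q^(tri (n+1-j)) * qChoose q (n+1) j) * y^j) (n+1)]
    rw [Finset.sum_congr rfl (fun j hj => hstep j (Finset.mem_range.mp hj)),
      Finset.sum_add_distrib]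
    have hA : ∑ j ∈ Finset.range (n+1), -(y * e j) = -(y * ∑ j ∈ Finset.range (n+1), e j) := by
      rw [Finset.mul_sum, ← Finset.sum_neg_distrib]
    have hB : ∑ j ∈ Finset.range (n+1), q^n * e (j+1)
        = q^n * ((∑ j ∈ Finset.range (n+1), e j) + e (n+1) - e 0) := by
      rw [← Finset.mul_sum]
      congr 1
      linear_combination (Finset.sum_range_succ e (n+1)) - (Finset.sum_range_succ' e (n+1))
    have he0 : e 0 = q^(tri n) := by simp [hedef]
    have hen : e (n+1) = 0 := by
      simp only [hedef]
      rw [qChoose_eq_zero q (show n < n+1 by omega)]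
      ring
    rw [hA, hB, hen, he0, ih y, Finset.prod_range_succ]
    have : ((-1:R)^0 * q^(tri (n+1-0)) * qChoose q (n+1) 0) * y^0 = q^(tri n) * q^n := by
      rw [Nat.sub_zero, tri_succ, pow_add]
      simp
    rw [this]
    ring

lemma lemE : ∀ M : ℕ,
    ∑ k ∈ Finset.range (M+1), (-1:R)^k * q^(tri k) * qChoose q M k
    = if M = 0 then 1 else 0 := by
  intro M
  cases M with
  | zero => simp [tri]
  | succ M =>
    rw [if_neg (by omega)]
    set u : ℕ → R := fun k => (-1:R)^k * q^(tri (k+1)) * qChoose q M k with hudef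
    have hstep : ∀ k, (-1:R)^(k+1) * q^(tri (k+1)) * qChoose q (M+1) (k+1)
        = u (k+1) - u k := by
      intro k
      simp only [hudef]
      rw [qChoose_succ_succ, tri_succ (k+1), pow_add]
      ring
    rw [Finset.sum_range_succ' (fun k => (-1:R)^k * q^(tri k) * qChoose q (M+1) k) (M+1)]
    rw [Finset.sum_congr rfl (fun k _ => hstep k), Finset.sum_range_sub u (M+1)]
    have hu1 : u (M+1) = 0 := by
      simp only [hudef]
      rw [qChoose_eq_zero q (show M < M+1 by omega)]
      ring
    have hu0 : u 0 = 1 := by simp [hudef, tri]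
    rw [hu1, hu0]
    simp [tri]

lemma lemF : ∀ m i : ℕ, i ≤ m → qFact q i * qFact q (m-i) * qChoose q m i = qFact q m := by
  intro m
  induction m with
  | zero => intro i hi; interval_cases i; simp [qFact]
  | succ m ih =>
    intro i hi
    cases i with
    | zero => simp [qFact]
    | succ i =>
      have him : i ≤ m := by omega
      rw [qChoose_succ_succ, qFact_succ q i]
      have hsub : m + 1 - (i+1) = m - i := by omega
      rw [hsub]
      by_cases hlt : i < m
      · have hsub2 : m - i = (m - (i+1)) + 1 := by omega
        have key1 : qFact q i * qFact q (m-i) * qChoose q m i = qFact q m := ih i him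
        have key2 : qFact q (i+1) * qFact q (m-(i+1)) * qChoose q m (i+1) = qFact q m :=
          ih (i+1) hlt
        rw [qFact_succ q i] at key2
        have hqint : qInt q (i+1) + q^(i+1) * qInt q (m-i) = qInt q (m+1) := by
          rw [← qInt_add]
          congr 1
          omega
        rw [qFact_succ q m, ← hqint]
        have e2 : qFact q (m-i) = qFact q (m-(i+1)) * qInt q (m-i) := by
          rw [hsub2, qFact_succ]
        rw [e2] at key1 ⊢
        linear_combination qInt q (i+1) * key1 + q^(i+1) * qInt q (m-i) * key2
      · have hieq : i = m := by omega
        subst hieq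
        rw [qChoose_eq_zero q (show i < i+1 by omega), qChoose_self]
        have : i - i = 0 := by omega
        rw [this]
        rw [qFact_succ q i]
        show qFact q i * qInt q (i+1) * 1 * (1 + q^(i+1) * 0) = qFact q i * qInt q (i+1)
        ring

open Polynomial in
lemma qInt_X_eval_one (k : ℕ) : (qInt (X : Polynomial ℤ) k).eval 1 = k := by
  simp [qInt, Polynomial.eval_finset_sum]

open Polynomial in
lemma qFact_X_eval_one (n : ℕ) : (qFact (X : Polynomial ℤ) n).eval 1 = Nat.factorial n := by
  induction n with
  | zero => simp [qFact]
  | succ n ih =>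
    rw [qFact_succ, Polynomial.eval_mul, ih, qInt_X_eval_one, Nat.factorial_succ]
    push_cast
    ring

open Polynomial in
lemma qFact_X_ne_zero (n : ℕ) : qFact (X : Polynomial ℤ) n ≠ 0 := by
  intro h
  have := qFact_X_eval_one n
  rw [h] at this
  simp at this
  exact Nat.factorial_ne_zero n (by exact_mod_cast this.symm)

open Polynomial in
lemma lemD {l i : ℕ} (m : ℕ) (hl : l ≤ i) :
    qChoose (X : Polynomial ℤ) m i * qChoose (X : Polynomial ℤ) i l
    = qChoose (X : Polynomial ℤ) m l * qChoose (X : Polynomial ℤ) (m-l) (i-l) := by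
  by_cases him : i ≤ m
  · have hlm : l ≤ m := le_trans hl him
    have e1 := lemF (X : Polynomial ℤ) i l hl
    have e2 := lemF (X : Polynomial ℤ) m i him
    have e3 := lemF (X : Polynomial ℤ) m l hlm
    have e4 := lemF (X : Polynomial ℤ) (m-l) (i-l) (by omega)
    have emi : (m-l)-(i-l) = m-i := by omega
    rw [emi] at e4
    have hne : qFact (X : Polynomial ℤ) l * qFact (X : Polynomial ℤ) (i-l)
        * qFact (X : Polynomial ℤ) (m-i) ≠ 0 :=
      mul_ne_zero (mul_ne_zero (qFact_X_ne_zero l) (qFact_X_ne_zero (i-l))) (qFact_X_ne_zero (m-i))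
    apply mul_right_cancel₀ hne
    linear_combination (qChoose (X : Polynomial ℤ) m i * qFact (X : Polynomial ℤ) (m-i)) * e1
      + e2 - (qChoose (X : Polynomial ℤ) m l * qFact (X : Polynomial ℤ) l) * e4 - e3
  · rw [qChoose_eq_zero _ (show m < i by omega)]
    by_cases hlm : l ≤ m
    · rw [qChoose_eq_zero _ (show m - l < i - l by omega)]
      ring
    · rw [qChoose_eq_zero _ (show m < l by omega)]
      ring

open Polynomial in
lemma lemS {l i : ℕ} (hl : l ≤ i) :
    qChoose (X : Polynomial ℤ) i l = qChoose (X : Polynomial ℤ) i (i-l) := by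
  have e1 := lemF (X : Polynomial ℤ) i l hl
  have e2 := lemF (X : Polynomial ℤ) i (i-l) (by omega)
  have : i - (i-l) = l := by omega
  rw [this] at e2
  have hne : qFact (X : Polynomial ℤ) l * qFact (X : Polynomial ℤ) (i-l) ≠ 0 :=
    mul_ne_zero (qFact_X_ne_zero l) (qFact_X_ne_zero (i-l))
  apply mul_right_cancel₀ hne
  linear_combination e1 - e2

open Polynomial in
lemma lemA (m l : ℕ) :
    ∑ i ∈ Finset.range (m+1),
      (-1 : Polynomial ℤ)^(i+l) * X^(tri (i-l)) * qChoose (X : Polynomial ℤ) m i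
        * qChoose (X : Polynomial ℤ) i l
    = if l = m then 1 else 0 := by
  by_cases hlm : l ≤ m
  · rw [show m+1 = l + (m-l+1) from by omega, Finset.sum_range_add]
    have hz : ∑ i ∈ Finset.range l,
        (-1 : Polynomial ℤ)^(i+l) * X^(tri (i-l)) * qChoose (X : Polynomial ℤ) m i
          * qChoose (X : Polynomial ℤ) i l = 0 := by
      apply Finset.sum_eq_zero
      intro i hi
      rw [qChoose_eq_zero _ (show i < l from Finset.mem_range.mp hi)]
      ring
    rw [hz, zero_add]
    have hterm : ∀ k, k < m-l+1 →
        (-1 : Polynomial ℤ)^(l+k+l) * X^(tri (l+k-l)) * qChoose (X : Polynomial ℤ) m (l+k)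
          * qChoose (X : Polynomial ℤ) (l+k) l
        = qChoose (X : Polynomial ℤ) m l
            * ((-1 : Polynomial ℤ)^k * X^(tri k) * qChoose (X : Polynomial ℤ) (m-l) k) := by
      intro k hk
      have h1 : l+k-l = k := by omega
      have h2 : (l+k)-l = k := by omega
      rw [h1, show l+k+l = k + 2*l from by omega, pow_add, pow_mul, neg_one_sq, one_pow, mul_one]
      have hD := lemD m (show l ≤ l+k by omega)
      rw [h2] at hD
      linear_combination ((-1 : Polynomial ℤ)^k * X^(tri k)) * hD
    rw [Finset.sum_congr rfl (fun k hk => hterm k (Finset.mem_range.mp hk)), ← Finset.mul_sum,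
      lemE]
    by_cases heq : l = m
    · subst heq
      rw [if_pos (by omega), if_pos rfl, qChoose_self]
      ring
    · rw [if_neg (by omega), if_neg heq]
      ring
  · rw [if_neg (by omega)]
    apply Finset.sum_eq_zero
    intro i hi
    have hi' := Finset.mem_range.mp hi
    rw [qChoose_eq_zero _ (show i < l by omega)]
    ring

lemma neg_one_pow_sub {a b : ℕ} (h : b ≤ a) : (-1:R)^(a-b) = (-1:R)^(a+b) := by
  rw [show a + b = (a-b) + 2*b from by omega, pow_add, pow_mul, neg_one_sq, one_pow, mul_one]

lemma neg_one_pow_pair (a b : ℕ) : (-1:R)^(a+b) * (-1:R)^(a+b) = 1 := by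
  rw [← pow_add, show (a+b)+(a+b) = 2*(a+b) from by omega, pow_mul, neg_one_sq, one_pow]


/-- The `p`-Frobenius coefficients
`A_{n,i} := Σ_{j=0}^{n} (−1)^{n−j} t^{p(n−j)(n−j−1)/2} (n choose j)_{t^p} (pj choose i)_t`
in `ℤ[t]`. -/
noncomputable def frobCoeff (p n i : ℕ) : Polynomial ℤ :=
  ∑ j ∈ Finset.range (n + 1),
    (-1 : Polynomial ℤ) ^ (n - j) * Polynomial.X ^ (p * ((n - j) * (n - j - 1) / 2)) *
      qChoose ((Polynomial.X : Polynomial ℤ) ^ p) n j *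
      qChoose (Polynomial.X : Polynomial ℤ) (p * j) i

open Polynomial in
lemma frobCoeff_eq (p n i : ℕ) : frobCoeff p n i
    = ∑ j ∈ Finset.range (n + 1),
      (-1 : Polynomial ℤ) ^ (n + j) * ((X : Polynomial ℤ)^p) ^ (tri (n-j)) *
        qChoose ((X : Polynomial ℤ) ^ p) n j * qChoose (X : Polynomial ℤ) (p * j) i := by
  unfold frobCoeff
  apply Finset.sum_congr rfl
  intro j hj
  have hj' : j ≤ n := by have := Finset.mem_range.mp hj; omega
  rw [neg_one_pow_sub hj', pow_mul]
  rfl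

noncomputable def hL (p n i : ℕ) : Polynomial ℤ :=
  (-1 : Polynomial ℤ)^(n+i) * Polynomial.X^(tri i) *
    ((1-Polynomial.X)^i * qFact (Polynomial.X : Polynomial ℤ) i) * frobCoeff p n i

noncomputable def Cn (p n : ℕ) : Polynomial ℤ :=
  (1-(Polynomial.X : Polynomial ℤ)^p)^n * qFact ((Polynomial.X : Polynomial ℤ)^p) n *
    ((Polynomial.X : Polynomial ℤ)^p)^(tri n)

noncomputable def hR (p n i : ℕ) : Polynomial ℤ :=
  Cn p n * ∑ l ∈ Finset.range (i+1),
    (-1 : Polynomial ℤ)^(i+l) * Polynomial.X^(tri (i-l)) *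
      qChoose (Polynomial.X : Polynomial ℤ) i l * qChoose ((Polynomial.X : Polynomial ℤ)^p) l n

open Polynomial in
lemma lemG {R : Type*} [CommRing R] (q : R) (n m : ℕ) :
    ∏ k ∈ Finset.range n, (q^k - q^m)
    = q^(tri n) * ((1-q)^n * qFact q n * qChoose q m n) := by
  induction n with
  | zero => simp [tri, qFact]
  | succ n ih =>
    rw [Finset.prod_range_succ, ih, tri_succ, pow_add]
    linear_combination (-(q^(tri n))) * V_succ q m n

open Polynomial in
lemma stepE (p n m : ℕ) :
    ∑ i ∈ Finset.range (m+1), qChoose (X : Polynomial ℤ) m i * hL p n i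
    = Cn p n * qChoose ((X : Polynomial ℤ)^p) m n := by
  have expand : ∀ i, qChoose (X : Polynomial ℤ) m i * hL p n i
      = ∑ j ∈ Finset.range (n+1),
          ((-1:Polynomial ℤ)^j * ((X:Polynomial ℤ)^p)^(tri (n-j)) * qChoose ((X:Polynomial ℤ)^p) n j)
          * (((-1:Polynomial ℤ)^i * X^(tri i)
              * ((1-X)^i * qFact (X:Polynomial ℤ) i * qChoose (X:Polynomial ℤ) m i))
            * qChoose (X:Polynomial ℤ) (p*j) i) := by
    intro i
    rw [hL, frobCoeff_eq, Finset.mul_sum, Finset.mul_sum]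
    apply Finset.sum_congr rfl
    intro j hj
    have sgn : (-1:Polynomial ℤ)^(n+i) * (-1:Polynomial ℤ)^(n+j)
        = (-1:Polynomial ℤ)^i * (-1:Polynomial ℤ)^j := by
      rw [← pow_add, ← pow_add, show (n+i)+(n+j) = (i+j) + 2*n from by omega,
        pow_add, pow_mul, neg_one_sq, one_pow, mul_one]
    linear_combination (X^(tri i) * ((1-X)^i * qFact (X:Polynomial ℤ) i)
      * qChoose (X:Polynomial ℤ) m i * ((X:Polynomial ℤ)^p)^(tri (n-j))
      * qChoose ((X:Polynomial ℤ)^p) n j * qChoose (X:Polynomial ℤ) (p*j) i) * sgn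
  rw [Finset.sum_congr rfl (fun i _ => expand i), Finset.sum_comm]
  have inner : ∀ j, ∑ i ∈ Finset.range (m+1),
      ((-1:Polynomial ℤ)^j * ((X:Polynomial ℤ)^p)^(tri (n-j)) * qChoose ((X:Polynomial ℤ)^p) n j)
        * (((-1:Polynomial ℤ)^i * X^(tri i)
            * ((1-X)^i * qFact (X:Polynomial ℤ) i * qChoose (X:Polynomial ℤ) m i))
          * qChoose (X:Polynomial ℤ) (p*j) i)
      = ((-1:Polynomial ℤ)^j * ((X:Polynomial ℤ)^p)^(tri (n-j)) * qChoose ((X:Polynomial ℤ)^p) n j)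
          * (((X:Polynomial ℤ)^p)^m)^j := by
    intro j
    rw [← Finset.mul_sum, lemU (X:Polynomial ℤ) m (p*j)]
    rw [show m*(p*j) = p*(m*j) from by ring, pow_mul, pow_mul]
  rw [Finset.sum_congr rfl (fun j _ => inner j), lemC ((X:Polynomial ℤ)^p) n (((X:Polynomial ℤ)^p)^m),
    lemG ((X:Polynomial ℤ)^p) n m, Cn]
  ring

open Polynomial in
lemma stepOrt (p n m : ℕ) :
    ∑ i ∈ Finset.range (m+1), qChoose (X : Polynomial ℤ) m i * hR p n i
    = Cn p n * qChoose ((X : Polynomial ℤ)^p) m n := by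
  have expand : ∀ i ∈ Finset.range (m+1), qChoose (X : Polynomial ℤ) m i * hR p n i
      = ∑ l ∈ Finset.range (m+1),
          (Cn p n * qChoose ((X:Polynomial ℤ)^p) l n)
            * ((-1:Polynomial ℤ)^(i+l) * X^(tri (i-l)) * qChoose (X:Polynomial ℤ) m i
                * qChoose (X:Polynomial ℤ) i l) := by
    intro i hi
    have hi' : i+1 ≤ m+1 := by have := Finset.mem_range.mp hi; omega
    calc qChoose (X : Polynomial ℤ) m i * hR p n i
        = ∑ l ∈ Finset.range (i+1),
            (Cn p n * qChoose ((X:Polynomial ℤ)^p) l n)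
              * ((-1:Polynomial ℤ)^(i+l) * X^(tri (i-l)) * qChoose (X:Polynomial ℤ) m i
                  * qChoose (X:Polynomial ℤ) i l) := by
          rw [hR, Finset.mul_sum, Finset.mul_sum]
          exact Finset.sum_congr rfl fun l _ => by ring
      _ = _ := by
          apply Finset.sum_subset (Finset.range_subset_range.mpr hi')
          intro l hl hnl
          rw [qChoose_eq_zero _ (show i < l from by
            have := Finset.mem_range.mp hl
            simp only [Finset.mem_range] at hnl
            omega)]
          ring
  rw [Finset.sum_congr rfl expand, Finset.sum_comm]
  have inner : ∀ l, ∑ i ∈ Finset.range (m+1),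
      (Cn p n * qChoose ((X:Polynomial ℤ)^p) l n)
        * ((-1:Polynomial ℤ)^(i+l) * X^(tri (i-l)) * qChoose (X:Polynomial ℤ) m i
            * qChoose (X:Polynomial ℤ) i l)
      = if l = m then Cn p n * qChoose ((X:Polynomial ℤ)^p) l n else 0 := by
    intro l
    rw [← Finset.mul_sum, lemA m l]
    by_cases h : l = m
    · rw [if_pos h, if_pos h, mul_one]
    · rw [if_neg h, if_neg h, mul_zero]
  rw [Finset.sum_congr rfl (fun l _ => inner l), Finset.sum_ite_eq' (Finset.range (m+1)) m
    (fun l => Cn p n * qChoose ((X:Polynomial ℤ)^p) l n)]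
  rw [if_pos (Finset.mem_range.mpr (by omega))]

open Polynomial in
lemma stepUniq (p n : ℕ) : ∀ i, hL p n i = hR p n i := by
  intro i
  induction i using Nat.strong_induction_on with
  | _ i ih =>
    have E := stepE p n i
    have O := stepOrt p n i
    rw [Finset.sum_range_succ, qChoose_self] at E O
    have hsum : ∑ k ∈ Finset.range i, qChoose (X : Polynomial ℤ) i k * hL p n k
        = ∑ k ∈ Finset.range i, qChoose (X : Polynomial ℤ) i k * hR p n k :=
      Finset.sum_congr rfl fun k hk => by rw [ih k (Finset.mem_range.mp hk)]
    linear_combination E - O - hsum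

open Polynomial in
lemma claim1 (p n i : ℕ) (hni : n ≤ i) :
    ∑ l ∈ Finset.range (i+1),
      (-1 : Polynomial ℤ)^(i+l) * X^(tri (i-l)) * qChoose (X : Polynomial ℤ) i l
        * qChoose ((X : Polynomial ℤ)^p) l n
    = ∑ l ∈ Finset.range (i-n+1),
      (-1 : Polynomial ℤ)^l * X^(tri l) * qChoose (X : Polynomial ℤ) i l
        * qChoose ((X : Polynomial ℤ)^p) (i-l) n := by
  rw [← Finset.sum_range_reflect]
  have h1 : ∀ l ∈ Finset.range (i+1),
      (-1 : Polynomial ℤ)^(i+(i+1-1-l)) * X^(tri (i-(i+1-1-l)))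
        * qChoose (X : Polynomial ℤ) i (i+1-1-l) * qChoose ((X : Polynomial ℤ)^p) (i+1-1-l) n
      = (-1 : Polynomial ℤ)^l * X^(tri l) * qChoose (X : Polynomial ℤ) i l
        * qChoose ((X : Polynomial ℤ)^p) (i-l) n := by
    intro l hl
    have hl' : l ≤ i := by have := Finset.mem_range.mp hl; omega
    have e0 : i+1-1-l = i-l := by omega
    have e1 : i-(i-l) = l := by omega
    rw [e0, e1]
    have e2 : (-1 : Polynomial ℤ)^(i+(i-l)) = (-1 : Polynomial ℤ)^l := by
      rw [show i+(i-l) = l + 2*(i-l) from by omega, pow_add, pow_mul, neg_one_sq, one_pow, mul_one]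
    rw [e2, ← lemS (show l ≤ i from hl')]
  rw [Finset.sum_congr rfl h1]
  symm
  apply Finset.sum_subset (Finset.range_subset_range.mpr (by omega : i-n+1 ≤ i+1))
  intro l hl hnl
  rw [qChoose_eq_zero _ (show i - l < n from by
    have := Finset.mem_range.mp hl
    simp only [Finset.mem_range] at hnl
    omega)]
  ring

open Polynomial in
lemma one_sub_X_ne_zero : (1 - X : Polynomial ℤ) ≠ 0 := by
  intro h
  have := congrArg (Polynomial.eval 0) h
  simp at this

/-- `A_{n,i} = 0` unless `n ≤ i ≤ pn`, and in that range
`t^{i(i−1)/2} (1−t)^{i−n} (i)_t! A_{n,i}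
 = (p)_t^n (n)_{t^p}! t^{pn(n−1)/2} Σ_{l=0}^{i−n} (−1)^{i−n+l} t^{l(l−1)/2}
    (i choose l)_t (i−l choose n)_{t^p}`. -/
theorem statement17 (p : ℕ) (hp : 1 ≤ p) :
    (∀ n i : ℕ, (i < n ∨ p * n < i) → frobCoeff p n i = 0) ∧
    (∀ n i : ℕ, n ≤ i → i ≤ p * n →
      Polynomial.X ^ (i * (i - 1) / 2) * (1 - Polynomial.X) ^ (i - n) *
          qFact (Polynomial.X : Polynomial ℤ) i * frobCoeff p n i =
        (qInt (Polynomial.X : Polynomial ℤ) p) ^ n *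
          qFact ((Polynomial.X : Polynomial ℤ) ^ p) n *
          Polynomial.X ^ (p * (n * (n - 1) / 2)) *
          ∑ l ∈ Finset.range (i - n + 1),
            (-1 : Polynomial ℤ) ^ (i - n + l) * Polynomial.X ^ (l * (l - 1) / 2) *
              qChoose (Polynomial.X : Polynomial ℤ) i l *
              qChoose ((Polynomial.X : Polynomial ℤ) ^ p) (i - l) n) := by
  constructor
  · intro n i hcase
    rcases hcase with hlt | hgt
    · have HU := stepUniq p n i
      have hRzero : hR p n i = 0 := by
        unfold hR
        rw [Finset.sum_eq_zero, mul_zero]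
        intro l hl
        rw [qChoose_eq_zero _ (show l < n from by have := Finset.mem_range.mp hl; omega)]
        ring
      rw [hRzero] at HU
      unfold hL at HU
      have hne : (-1 : Polynomial ℤ)^(n+i) * Polynomial.X^(tri i)
          * ((1-Polynomial.X)^i * qFact (Polynomial.X : Polynomial ℤ) i) ≠ 0 := by
        apply mul_ne_zero
        · exact mul_ne_zero (pow_ne_zero _ (by norm_num)) (pow_ne_zero _ Polynomial.X_ne_zero)
        · exact mul_ne_zero (pow_ne_zero _ one_sub_X_ne_zero) (qFact_X_ne_zero i)
      exact (mul_eq_zero.mp HU).resolve_left hne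
    · unfold frobCoeff
      apply Finset.sum_eq_zero
      intro j hj
      have h1 : p*j ≤ p*n := Nat.mul_le_mul_left p (by have := Finset.mem_range.mp hj; omega)
      rw [qChoose_eq_zero _ (show p*j < i from by omega)]
      ring
  · intro n i hni hpin
    have HU := stepUniq p n i
    unfold hL hR Cn at HU
    rw [claim1 p n i hni] at HU
    apply mul_right_cancel₀ (pow_ne_zero n one_sub_X_ne_zero)
    simp only [show i*(i-1)/2 = tri i from rfl, show n*(n-1)/2 = tri n from rfl,
      show ∀ l : ℕ, l*(l-1)/2 = tri l from fun l => rfl]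
    have e1 : (1-Polynomial.X : Polynomial ℤ)^(i-n) * (1-Polynomial.X)^n
        = (1-Polynomial.X)^i := by
      rw [← pow_add]
      congr 1
      omega
    have e2 : (qInt (Polynomial.X : Polynomial ℤ) p)^n * (1-Polynomial.X)^n
        = (1-(Polynomial.X : Polynomial ℤ)^p)^n := by
      rw [← mul_pow, mul_comm, one_sub_mul_qInt]
    have hXp : (Polynomial.X : Polynomial ℤ)^(p * tri n)
        = ((Polynomial.X : Polynomial ℤ)^p)^(tri n) := pow_mul _ p (tri n)
    have hsgn : ∀ l : ℕ, (-1 : Polynomial ℤ)^(i-n+l)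
        = (-1 : Polynomial ℤ)^(n+i) * (-1 : Polynomial ℤ)^l := by
      intro l
      symm
      rw [← pow_add, show (n+i)+l = (i-n+l) + 2*n from by omega,
        pow_add (-1 : Polynomial ℤ) (i-n+l) (2*n), pow_mul, neg_one_sq, one_pow, mul_one]
    have hsum : (∑ l ∈ Finset.range (i-n+1),
          (-1 : Polynomial ℤ)^(i-n+l) * Polynomial.X^(tri l) *
            qChoose (Polynomial.X : Polynomial ℤ) i l *
            qChoose ((Polynomial.X : Polynomial ℤ)^p) (i-l) n)
        = (-1 : Polynomial ℤ)^(n+i) * ∑ l ∈ Finset.range (i-n+1),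
            (-1 : Polynomial ℤ)^l * Polynomial.X^(tri l) *
              qChoose (Polynomial.X : Polynomial ℤ) i l *
              qChoose ((Polynomial.X : Polynomial ℤ)^p) (i-l) n := by
      rw [Finset.mul_sum]
      exact Finset.sum_congr rfl fun l _ => by rw [hsgn l]; ring
    rw [hsum, hXp]
    have hpair := neg_one_pow_pair (R := Polynomial ℤ) n i
    set SL := ∑ l ∈ Finset.range (i-n+1),
        (-1 : Polynomial ℤ)^l * Polynomial.X^(tri l) *
          qChoose (Polynomial.X : Polynomial ℤ) i l *
          qChoose ((Polynomial.X : Polynomial ℤ)^p) (i-l) n with hSL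
    linear_combination (Polynomial.X^(tri i) * qFact (Polynomial.X : Polynomial ℤ) i
        * frobCoeff p n i) * e1
      + ((-1 : Polynomial ℤ)^(n+i)) * HU
      - (Polynomial.X^(tri i) * (1-Polynomial.X)^i * qFact (Polynomial.X : Polynomial ℤ) i
          * frobCoeff p n i) * hpair
      - ((-1 : Polynomial ℤ)^(n+i) * qFact ((Polynomial.X : Polynomial ℤ)^p) n
          * ((Polynomial.X : Polynomial ℤ)^p)^(tri n) * SL) * e2
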